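/- In the setting of the accelerated proximal Jacobian ADMM with parameters β_k = ρ_k = kβ, P^k = kP + L_f I (β > 0, P symmetric with P − βAᵀA positive definite and ⪯ (μ/2)I, k₀ := 2L_f/μ), where f is convex differentiable with L_f-Lipschitz gradient, g is μ-strongly convex (μ > 0), F := f + g, the iterates satisfy λ¹ = 0, λ^{k+1} = λ^k − ρ_k(Ax^{k+1} − b), and for each k ≥ 1 there is a subgradient v of g at x^{k+1} with ∇f(x^k) − Aᵀ(λ^k − β_k(Ax^k − b)) + v + P^k(x^{k+1} − x^k) = 0, and there exists a KKT point (x*, λ*) (i.e., a subgradient w of F at x* with w = Aᵀλ* and Ax* = b): setting γ := max{2‖λ*‖, 1 + ‖λ*‖}, T := t(t+2k₀+3)/2, and x̄^{t+1} := (1/T) ∑_{k=1}^t (k+k₀+1) x^{k+1}, one has |F(x̄^{t+1}) − F(x*)| ≤ (1/T) sup_{‖λ‖ ≤ γ} φ₁(x*, λ) and ‖A x̄^{t+1} − b‖ ≤ (1/(T·max{1, ‖λ*‖})) sup_{‖λ‖ ≤ γ} φ₁(x*, λ), where φ₁(x, λ) := ((k₀+2)/(2β))‖λ‖² + ((k₀+2)/2)‖x¹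 − x‖²_{P + L_f I − β AᵀA}. -/

import Mathlib

/-!
For every multiplier `λ`, the weighted Lagrangian gap
`(k + k₀ + 1) (F(x^{k+1}) - F(x*) + ⟪λ, A x^{k+1} - b⟫)` is bounded by the decrease of the energy
`E_k(λ) = (k + k₀ + 1)/(2kβ) ‖λ + λ^k‖² + (k + k₀ + 1)/2 (k ‖x^k - x*‖²_M + L_f ‖x^k - x*‖²)`,
where `M = P - βAᵀA`. This follows from the descent lemma for `f`, the strong-convexity
subgradient inequality for `g`, and three-point identities for the multiplier update and for `M`;
`L_f = k₀ μ / 2` is exactly what lets the strong-convexity term `μ/2 ‖x^{k+1} - x*‖²` absorb the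
growth of the primal weights from step `k` to `k + 1`. Telescoping and Jensen's inequality give
`T (F(x̄) - F(x*) + ⟪λ, A x̄ - b⟫) ≤ E_1(λ) = φ₁(x*, λ)`. Taking `λ = 0` and `λ` of norm `γ`
aligned with `A x̄ - b`, and bounding `F(x̄) - F(x*)` from below by `⟪λ*, A x̄ - b⟫` (KKT), gives
both estimates.
-/

/-- quadratic form `‖v‖²_W = ⟪v, W v⟫` associated to an operator `W`. -/
noncomputable def qform {E : Type*} [NormedAddCommGroup E] [InnerProductSpace ℝ E]
    (W : E →L[ℝ] E) (v : E) : ℝ := inner ℝ v (W v)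

open Set Filter Topology
open ContinuousLinearMap (adjoint)

section InnerProductSpace

variable {E : Type*} [NormedAddCommGroup E] [InnerProductSpace ℝ E]

theorem ConvexOn.add_inner_gradient_le [CompleteSpace E] {f : E → ℝ} {f' x : E}
    (hf : ConvexOn ℝ univ f) (hf' : HasGradientAt f f' x) (u : E) :
    f x + inner ℝ f' (u - x) ≤ f u := by
  let ℓ : ℝ →ᵃ[ℝ] E := AffineMap.lineMap x u
  have hconv : ConvexOn ℝ univ (f ∘ ℓ) := hf.comp_affineMap ℓ
  have hderiv : HasDerivAt (f ∘ ℓ) (inner ℝ f' (u - x)) 0 := by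
    have := hf'.hasFDerivAt.comp_hasDerivAt_of_eq (x := 0)
      (AffineMap.hasDerivAt_lineMap (a := x) (b := u)) (by simp)
    simpa [ℓ, InnerProductSpace.toDual_apply_apply] using this
  have := hconv.le_slope_of_hasDerivAt (mem_univ 0) (mem_univ 1) zero_lt_one hderiv
  simp only [slope_def_field, Function.comp_apply, AffineMap.lineMap_apply_one,
    AffineMap.lineMap_apply_zero, sub_zero, div_one, ℓ] at this
  linarith

theorem le_add_inner_gradient_add_sq [CompleteSpace E] {f : E → ℝ} {Gf : E → E} {L : ℝ}
    (hGf : ∀ z, HasGradientAt f (Gf z) z) (hL : ∀ u v, ‖Gf u - Gf v‖ ≤ L * ‖u - v‖) (x y : E) :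
    f y ≤ f x + inner ℝ (Gf x) (y - x) + L / 2 * ‖y - x‖ ^ 2 := by
  set d := y - x
  let φ : ℝ → ℝ := fun s =>
    f (AffineMap.lineMap x y s) - s * inner ℝ (Gf x) d - s ^ 2 * (L / 2 * ‖d‖ ^ 2)
  have hφ : ∀ s, HasDerivAt φ
      (inner ℝ (Gf (AffineMap.lineMap x y s) - Gf x) d - s * (L * ‖d‖ ^ 2)) s := by
    intro s
    have h1 := (hGf _).hasFDerivAt.comp_hasDerivAt s
      (AffineMap.hasDerivAt_lineMap (a := x) (b := y))
    have h2 := (hasDerivAt_id s).mul_const (inner ℝ (Gf x) d)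
    have h3 := (hasDerivAt_pow 2 s).mul_const (L / 2 * ‖d‖ ^ 2)
    refine ((h1.sub h2).sub h3).congr_deriv ?_
    simp only [InnerProductSpace.toDual_apply_apply, inner_sub_left, d]
    ring
  have hanti : AntitoneOn φ (Icc 0 1) := by
    refine antitoneOn_of_deriv_nonpos (convex_Icc 0 1)
      (fun s _ => (hφ s).continuousAt.continuousWithinAt)
      (fun s _ => (hφ s).differentiableAt.differentiableWithinAt) fun s hs => ?_
    rw [interior_Icc] at hs
    rw [(hφ s).deriv, sub_nonpos]
    have hdist : ‖AffineMap.lineMap x y s - x‖ = s * ‖d‖ := by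
      rw [AffineMap.lineMap_apply, vadd_eq_add, add_sub_cancel_right, norm_smul, vsub_eq_sub,
        Real.norm_of_nonneg hs.1.le]
    calc inner ℝ (Gf (AffineMap.lineMap x y s) - Gf x) d
        ≤ ‖Gf (AffineMap.lineMap x y s) - Gf x‖ * ‖d‖ := real_inner_le_norm _ _
      _ ≤ L * (s * ‖d‖) * ‖d‖ := by
        gcongr
        exact (hL _ _).trans_eq (by rw [hdist])
      _ = s * (L * ‖d‖ ^ 2) := by ring
  have := hanti (left_mem_Icc.2 zero_le_one) (right_mem_Icc.2 zero_le_one) zero_le_one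
  simp only [AffineMap.lineMap_apply_one, AffineMap.lineMap_apply_zero, one_mul, one_pow,
    zero_mul, sub_zero, ne_eq, OfNat.ofNat_ne_zero, not_false_eq_true, zero_pow, φ] at this
  linarith

theorem StrongConvexOn.add_inner_add_sq_le {g : E → ℝ} {μ : ℝ} {v x : E}
    (hg : StrongConvexOn univ μ g) (hv : ∀ z, g x + inner ℝ v (z - x) ≤ g z) (z : E) :
    g x + inner ℝ v (z - x) + μ / 2 * ‖z - x‖ ^ 2 ≤ g z := by
  have hs : ∀ s ∈ Ioo (0 : ℝ) 1,
      g x + inner ℝ v (z - x) + (1 - s) * (μ / 2 * ‖z - x‖ ^ 2) ≤ g z := by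
    rintro s ⟨hs0, hs1⟩
    have hconv := hg.2 (mem_univ x) (mem_univ z) (sub_nonneg.2 hs1.le) hs0.le
      (sub_add_cancel 1 s)
    have hsub := hv ((1 - s) • x + s • z)
    have hdir : (1 - s) • x + s • z - x = s • (z - x) := by module
    rw [hdir, real_inner_smul_right] at hsub
    rw [norm_sub_rev] at hconv
    simp only [smul_eq_mul] at hconv
    have : s * (g x + inner ℝ v (z - x) + (1 - s) * (μ / 2 * ‖z - x‖ ^ 2)) ≤ s * g z := by
      nlinarith
    exact le_of_mul_le_mul_left this hs0
  have hlim : Tendsto (fun s : ℝ => g x + inner ℝ v (z - x) + (1 - s) * (μ / 2 * ‖z - x‖ ^ 2))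
      (𝓝[>] 0) (𝓝 (g x + inner ℝ v (z - x) + (1 - 0) * (μ / 2 * ‖z - x‖ ^ 2))) :=
    (Continuous.tendsto (by fun_prop) 0).mono_left nhdsWithin_le_nhds
  rw [sub_zero, one_mul] at hlim
  refine le_of_tendsto hlim ?_
  filter_upwards [Ioo_mem_nhdsGT one_pos] with s hs' using hs s hs'

theorem ConvexOn.sum_mul_map_centerMass_le {ι : Type*} {s : Finset ι} {w : ι → ℝ} {p : ι → E}
    {φ : E → ℝ} (hφ : ConvexOn ℝ univ φ) (hw₀ : ∀ i ∈ s, 0 ≤ w i) (hw : 0 < ∑ i ∈ s, w i) :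
    (∑ i ∈ s, w i) * φ (s.centerMass w p) ≤ ∑ i ∈ s, w i * φ (p i) := by
  have h := hφ.map_centerMass_le hw₀ hw fun i _ => mem_univ (p i)
  simp only [Finset.centerMass, smul_eq_mul, Function.comp_apply] at h
  rwa [le_inv_mul_iff₀ hw] at h

theorem qform_sub {M : E →L[ℝ] E} (hM : M.IsSymmetric) (y d : E) :
    qform M (y - d) = qform M y - 2 * inner ℝ y (M d) + qform M d := by
  have h : inner ℝ d (M y) = inner ℝ y (M d) := by
    simpa only [ContinuousLinearMap.coe_coe, real_inner_comm] using (hM d y).symm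
  simp only [qform, map_sub, inner_sub_left, inner_sub_right, h]
  ring

theorem qform_add_smul_one (M : E →L[ℝ] E) (c : ℝ) (v : E) :
    qform (M + c • 1) v = qform M v + c * ‖v‖ ^ 2 := by
  show inner ℝ v (M v + c • v) = _
  rw [inner_add_right, real_inner_smul_right, real_inner_self_eq_norm_sq, qform]

theorem abs_le_and_mul_norm_le_of_forall_inner_le {Δ C c γ : ℝ} {r lamstar : E}
    (hgap : ∀ lam : E, ‖lam‖ ≤ γ → Δ + inner ℝ lam r ≤ C) (hkkt : inner ℝ lamstar r ≤ Δ)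
    (hc : ‖lamstar‖ ≤ c) (hγ : ‖lamstar‖ + c ≤ γ) :
    |Δ| ≤ C ∧ c * ‖r‖ ≤ C := by
  have hγ₀ : 0 ≤ γ := by linarith [norm_nonneg lamstar]
  have hCS : -(‖lamstar‖ * ‖r‖) ≤ inner ℝ lamstar r :=
    neg_le_of_abs_le (abs_real_inner_le_norm lamstar r)
  have hres : c * ‖r‖ ≤ C := by
    -- `‖r‖⁻¹ = 0` when `r = 0`, so no case split is needed
    have h := hgap ((γ * ‖r‖⁻¹) • r) (by
      rw [norm_smul, Real.norm_of_nonneg (by positivity), mul_assoc]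
      exact mul_le_of_le_one_right hγ₀ (inv_mul_le_one_of_le₀ le_rfl (norm_nonneg r)))
    rw [real_inner_smul_left, real_inner_self_eq_norm_sq, mul_assoc, pow_two,
      ← mul_assoc _ ‖r‖, inv_mul_mul_self] at h
    nlinarith [norm_nonneg r]
  refine ⟨abs_le.2 ⟨?_, ?_⟩, hres⟩
  · nlinarith [norm_nonneg r]
  · simpa using hgap 0 (by simpa using hγ₀)

end InnerProductSpace

theorem le_sSup_image_norm_le {E : Type*} [NormedAddCommGroup E] [ProperSpace E] {φ : E → ℝ}
    (hφ : Continuous φ) {γ : ℝ} {lam : E} (hlam : ‖lam‖ ≤ γ) :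
    φ lam ≤ sSup (φ '' {l | ‖l‖ ≤ γ}) := by
  have hK : IsCompact {l : E | ‖l‖ ≤ γ} := by
    simpa [Metric.closedBall, dist_eq_norm] using isCompact_closedBall (0 : E) γ
  exact le_csSup (hK.bddAbove_image hφ.continuousOn) ⟨lam, hlam, rfl⟩

theorem sum_Icc_natCast_add_add_one (a : ℝ) (t : ℕ) :
    ∑ k ∈ Finset.Icc 1 t, ((k : ℝ) + a + 1) = t * (t + 2 * a + 3) / 2 := by
  induction t with
  | zero => simp
  | succ n ih =>
    rw [Finset.sum_Icc_succ_top (Nat.le_add_left 1 n), ih]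
    push_cast
    ring

/-- `E_k` with `D = ‖λ + λ^k‖²`, `Q = ‖x^k - x*‖²_M`,
`N = ‖x^k - x*‖²`. -/
noncomputable def admmEnergy (β k₀ L k D Q N : ℝ) : ℝ :=
  (k + k₀ + 1) / (2 * k * β) * D + (k + k₀ + 1) / 2 * (k * Q + L * N)

theorem mul_le_admmEnergy_sub {β k₀ μ L k gap D D' Q Q' N N' : ℝ} (hβ : 0 < β) (hk₀ : 0 ≤ k₀)
    (hL : L = k₀ * μ / 2) (hk : 1 ≤ k) (hD' : 0 ≤ D') (hQN' : Q' ≤ μ / 2 * N')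
    (hgap : gap ≤ (D - D') / (2 * (k * β)) + k / 2 * (Q - Q') + L / 2 * (N - N') - μ / 2 * N') :
    (k + k₀ + 1) * gap ≤ admmEnergy β k₀ L k D Q N - admmEnergy β k₀ L (k + 1) D' Q' N' := by
  have hdual : (k + 1 + k₀ + 1) / (2 * (k + 1) * β) * D' ≤ (k + k₀ + 1) / (2 * k * β) * D' := by
    gcongr ?_ * D'
    rw [div_le_div_iff₀ (by positivity) (by positivity)]
    nlinarith
  have hprimal : (2 * k + k₀ + 2) * Q' + L * N' ≤ (k + k₀ + 1) * μ * N' := by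
    subst hL
    nlinarith
  have hwgap := mul_le_mul_of_nonneg_left hgap (by positivity : (0 : ℝ) ≤ k + k₀ + 1)
  unfold admmEnergy
  linear_combination hwgap + hdual + hprimal / 2

theorem ConvexOn.add_inner_sub {E F : Type*} [NormedAddCommGroup E] [InnerProductSpace ℝ E]
    [NormedAddCommGroup F] [InnerProductSpace ℝ F] {φ : E → ℝ} (hφ : ConvexOn ℝ univ φ)
    (A : E →L[ℝ] F) (b lam : F) : ConvexOn ℝ univ fun z => φ z + inner ℝ lam (A z - b) := by
  refine hφ.add ⟨convex_univ, fun u _ w _ a c _ _ hac => le_of_eq ?_⟩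
  simp only [map_add, map_smul, smul_eq_mul, inner_sub_right, inner_add_right,
    real_inner_smul_right]
  linear_combination inner ℝ lam b * hac

section ADMM

variable {E F : Type*} [NormedAddCommGroup E] [InnerProductSpace ℝ E] [CompleteSpace E]
  [NormedAddCommGroup F] [InnerProductSpace ℝ F] [CompleteSpace F]

theorem isPositive_sub_smul_adjoint_comp_self {P : E →L[ℝ] E} {A : E →L[ℝ] F} {β : ℝ}
    (hP : (P : E →ₗ[ℝ] E).IsSymmetric) (hnonneg : ∀ v, 0 ≤ qform (P - β • (adjoint A).comp A) v) :
    (P - β • (adjoint A).comp A).IsPositive := by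
  refine (ContinuousLinearMap.isPositive_iff _).2 ⟨?_, fun v => ?_⟩
  · rw [ContinuousLinearMap.toLinearMap_sub, ContinuousLinearMap.toLinearMap_smul]
    exact hP.sub ((ContinuousLinearMap.isPositive_adjoint_comp_self A).isSymmetric.smul (by simp))
  · rw [real_inner_comm]
    exact hnonneg v

theorem objective_step_le {f g : E → ℝ} {Gf : E → E} {L μ : ℝ} (hf : ConvexOn ℝ univ f)
    (hGf : ∀ z, HasGradientAt f (Gf z) z) (hL : ∀ u v, ‖Gf u - Gf v‖ ≤ L * ‖u - v‖)
    (hg : StrongConvexOn univ μ g) {x x' xstar v : E}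
    (hv : ∀ z, g x' + inner ℝ v (z - x') ≤ g z) :
    f x' + g x' - (f xstar + g xstar)
      ≤ inner ℝ (Gf x + v) (x' - xstar) + L / 2 * ‖x' - x‖ ^ 2 - μ / 2 * ‖x' - xstar‖ ^ 2 := by
  have hdesc := le_add_inner_gradient_add_sq hGf hL x x'
  have hconv := hf.add_inner_gradient_le (hGf x) xstar
  have hstrong := hg.add_inner_add_sq_le hv xstar
  have hsplit : inner ℝ (Gf x) (x' - x) - inner ℝ (Gf x) (xstar - x)
      = inner ℝ (Gf x) (x' - xstar) := by rw [← inner_sub_right, sub_sub_sub_cancel_right]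
  rw [← neg_sub x' xstar, inner_neg_right, norm_neg] at hstrong
  rw [inner_add_left]
  linarith

theorem lagrangian_step_le {f g : E → ℝ} {Gf : E → E} {L μ : ℝ} (hf : ConvexOn ℝ univ f)
    (hGf : ∀ z, HasGradientAt f (Gf z) z) (hL : ∀ u v, ‖Gf u - Gf v‖ ≤ L * ‖u - v‖)
    (hg : StrongConvexOn univ μ g) {A : E →L[ℝ] F} {b : F} {M : E →L[ℝ] E} (hM : M.IsPositive)
    {c ρ : ℝ} (hc : 0 ≤ c) (hρ : 0 < ρ) {x x' xstar v : E} {lamk lam' lam : F}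
    (hv : ∀ z, g x' + inner ℝ v (z - x') ≤ g z)
    (hopt : Gf x + v = adjoint A lam' - c • M (x' - x) - L • (x' - x))
    (hlam : lamk = lam' + ρ • (A x' - b)) (hfeas : A xstar = b) :
    f x' + g x' - (f xstar + g xstar) + inner ℝ lam (A x' - b)
      ≤ (‖lam + lamk‖ ^ 2 - ‖lam + lam'‖ ^ 2) / (2 * ρ)
        + c / 2 * (qform M (x - xstar) - qform M (x' - xstar))
        + L / 2 * (‖x - xstar‖ ^ 2 - ‖x' - xstar‖ ^ 2) - μ / 2 * ‖x' - xstar‖ ^ 2 := by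
  set d := x' - x
  set y := x' - xstar
  set r := A x' - b
  have hyd : x - xstar = y - d := by simp only [y, d]; abel
  have hAy : A y = r := by simp only [y, r, map_sub, hfeas]
  have hobj := objective_step_le hf hGf hL hg (x := x) (xstar := xstar) hv
  have hinner : inner ℝ (Gf x + v) y
      = inner ℝ lam' r - c * inner ℝ y (M d) - L * inner ℝ y d := by
    rw [hopt, inner_sub_left, inner_sub_left, ContinuousLinearMap.adjoint_inner_left, hAy,
      real_inner_smul_left, real_inner_smul_left, real_inner_comm y (M d), real_inner_comm y d]
  have hdual : ‖lam + lamk‖ ^ 2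
      = ‖lam + lam'‖ ^ 2 + 2 * ρ * inner ℝ (lam + lam') r + ρ ^ 2 * ‖r‖ ^ 2 := by
    rw [hlam, ← add_assoc, norm_add_sq_real, real_inner_smul_right, norm_smul,
      Real.norm_of_nonneg hρ.le]
    ring
  have hdual_le :
      inner ℝ (lam + lam') r ≤ (‖lam + lamk‖ ^ 2 - ‖lam + lam'‖ ^ 2) / (2 * ρ) := by
    rw [le_div_iff₀ (by positivity), hdual]
    nlinarith [sq_nonneg (ρ * ‖r‖)]
  have hM_three := qform_sub hM.isSymmetric y d
  have hnorm_three : ‖y - d‖ ^ 2 = ‖y‖ ^ 2 - 2 * inner ℝ y d + ‖d‖ ^ 2 := norm_sub_sq_real y d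
  have hMd : 0 ≤ c * qform M d := mul_nonneg hc (hM.inner_nonneg_right d)
  rw [inner_add_left] at hdual_le
  rw [hyd, hM_three, hnorm_three]
  linarith

theorem grad_add_subgrad_eq_of_admm_step {A : E →L[ℝ] F} {b : F} {P : E →L[ℝ] E}
    {β k L : ℝ} {x x' u v : E} {lamk lam' : F}
    (hopt : u - adjoint A (lamk - (k * β) • (A x - b)) + v + (k • P + L • 1) (x' - x) = 0)
    (hlam : lam' = lamk - (k * β) • (A x' - b)) :
    u + v = adjoint A lam' - k • (P - β • (adjoint A).comp A) (x' - x) - L • (x' - x) := by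
  subst hlam
  rw [← sub_eq_zero, ← hopt]
  simp only [map_sub, map_smul, add_apply, sub_apply, smul_apply, ContinuousLinearMap.comp_apply,
    one_apply_eq_self]
  module

theorem mul_lagrangian_le_admmEnergy_sub {f g : E → ℝ} {Gf : E → E} {L μ β k₀ : ℝ}
    (hf : ConvexOn ℝ univ f) (hGf : ∀ z, HasGradientAt f (Gf z) z)
    (hL : ∀ u v, ‖Gf u - Gf v‖ ≤ L * ‖u - v‖) (hg : StrongConvexOn univ μ g) (hβ : 0 < β)
    (hk₀ : 0 ≤ k₀) (hLk₀ : L = k₀ * μ / 2) {A : E →L[ℝ] F} {b : F} {P : E →L[ℝ] E}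
    (hM : (P - β • (adjoint A).comp A).IsPositive)
    (hMle : ∀ v, qform (P - β • (adjoint A).comp A) v ≤ μ / 2 * ‖v‖ ^ 2)
    {xstar : E} (hfeas : A xstar = b) {k : ℕ} (hk : 1 ≤ k) {x x' v : E} {lamk lam' : F}
    (hv : ∀ z, g x' + inner ℝ v (z - x') ≤ g z)
    (hopt : Gf x - adjoint A (lamk - ((k : ℝ) * β) • (A x - b)) + v
      + ((k : ℝ) • P + L • 1) (x' - x) = 0)
    (hlam : lam' = lamk - ((k : ℝ) * β) • (A x' - b)) (lam : F) :
    ((k : ℝ) + k₀ + 1) * (f x' + g x' - (f xstar + g xstar) + inner ℝ lam (A x' - b))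
      ≤ admmEnergy β k₀ L k (‖lam + lamk‖ ^ 2) (qform (P - β • (adjoint A).comp A) (x - xstar))
          (‖x - xstar‖ ^ 2)
        - admmEnergy β k₀ L (k + 1) (‖lam + lam'‖ ^ 2)
          (qform (P - β • (adjoint A).comp A) (x' - xstar)) (‖x' - xstar‖ ^ 2) := by
  have hk' : (1 : ℝ) ≤ k := by exact_mod_cast hk
  have hgap := lagrangian_step_le (c := k) (ρ := k * β) hf hGf hL hg hM (by positivity)
    (by positivity) hv
    (grad_add_subgrad_eq_of_admm_step hopt hlam) (by rw [hlam, sub_add_cancel]) hfeas (lam := lam)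
  exact mul_le_admmEnergy_sub hβ hk₀ hLk₀ hk' (sq_nonneg _) (hMle _) hgap

theorem ergodic_lagrangian_le {f g : E → ℝ} {Gf : E → E} {L μ β k₀ : ℝ}
    (hf : ConvexOn ℝ univ f) (hGf : ∀ z, HasGradientAt f (Gf z) z)
    (hL : ∀ u v, ‖Gf u - Gf v‖ ≤ L * ‖u - v‖) (hg : StrongConvexOn univ μ g) (hμ : 0 ≤ μ)
    (hβ : 0 < β) (hk₀ : 0 ≤ k₀) (hLk₀ : L = k₀ * μ / 2) {A : E →L[ℝ] F} {b : F}
    {P : E →L[ℝ] E} (hM : (P - β • (adjoint A).comp A).IsPositive)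
    (hMle : ∀ v, qform (P - β • (adjoint A).comp A) v ≤ μ / 2 * ‖v‖ ^ 2)
    {xstar : E} (hfeas : A xstar = b) {x : ℕ → E} {lamseq : ℕ → F} (hlam1 : lamseq 1 = 0)
    (hiter : ∀ k : ℕ, 1 ≤ k → ∃ v : E, (∀ z, g (x (k + 1)) + inner ℝ v (z - x (k + 1)) ≤ g z) ∧
      Gf (x k) - adjoint A (lamseq k - ((k : ℝ) * β) • (A (x k) - b)) + v
        + ((k : ℝ) • P + L • 1) (x (k + 1) - x k) = 0)
    (hlam : ∀ k : ℕ, 1 ≤ k →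
      lamseq (k + 1) = lamseq k - ((k : ℝ) * β) • (A (x (k + 1)) - b))
    {t : ℕ} (ht : 1 ≤ t) (lam : F) :
    let xbar := (Finset.Icc 1 t).centerMass (fun k => (k : ℝ) + k₀ + 1) (fun k => x (k + 1))
    (∑ k ∈ Finset.Icc 1 t, ((k : ℝ) + k₀ + 1))
        * (f xbar + g xbar - (f xstar + g xstar) + inner ℝ lam (A xbar - b))
      ≤ (k₀ + 2) / (2 * β) * ‖lam‖ ^ 2
        + (k₀ + 2) / 2 * qform (P + L • 1 - β • (adjoint A).comp A) (x 1 - xstar) := by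
  intro xbar
  set M := P - β • (adjoint A).comp A
  set Φ : ℕ → ℝ := fun k => admmEnergy β k₀ L k (‖lam + lamseq k‖ ^ 2)
    (qform M (x k - xstar)) (‖x k - xstar‖ ^ 2)
  have hconv : ConvexOn ℝ univ
      fun z => f z + g z - (f xstar + g xstar) + inner ℝ lam (A z - b) :=
    ((hf.add (hg.convexOn fun r => by simp only [Pi.zero_apply]; positivity)).sub
      (concaveOn_const _ convex_univ)).add_inner_sub A b lam
  have hstep : ∀ k ∈ Finset.Icc 1 t,
      ((k : ℝ) + k₀ + 1) * (f (x (k + 1)) + g (x (k + 1)) - (f xstar + g xstar)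
        + inner ℝ lam (A (x (k + 1)) - b)) ≤ Φ k - Φ (k + 1) := by
    intro k hk
    have hk1 : 1 ≤ k := (Finset.mem_Icc.1 hk).1
    obtain ⟨v, hv, hopt⟩ := hiter k hk1
    simpa only [Φ, Nat.cast_add, Nat.cast_one] using mul_lagrangian_le_admmEnergy_sub hf hGf hL
      hg hβ hk₀ hLk₀ hM hMle hfeas hk1 hv hopt (hlam k hk1) lam
  have hΦ_nonneg : 0 ≤ Φ (t + 1) := by
    have hq : 0 ≤ qform M (x (t + 1) - xstar) := hM.inner_nonneg_right _
    have hL₀ : 0 ≤ L := by rw [hLk₀]; positivity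
    simp only [Φ, admmEnergy]
    positivity
  calc _ ≤ ∑ k ∈ Finset.Icc 1 t, ((k : ℝ) + k₀ + 1) * (f (x (k + 1)) + g (x (k + 1))
          - (f xstar + g xstar) + inner ℝ lam (A (x (k + 1)) - b)) :=
        hconv.sum_mul_map_centerMass_le (fun k _ => by positivity)
          (Finset.sum_pos (fun k _ => by positivity) ⟨1, Finset.mem_Icc.2 ⟨le_rfl, ht⟩⟩)
    _ ≤ ∑ k ∈ Finset.Icc 1 t, (Φ k - Φ (k + 1)) := Finset.sum_le_sum hstep
    _ = Φ 1 - Φ (t + 1) := by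
      simpa only [neg_sub_neg] using Finset.sum_Icc_sub ht (fun k => -Φ k)
    _ ≤ Φ 1 := sub_le_self _ hΦ_nonneg
    _ = _ := by
      simp only [Φ, admmEnergy, hlam1, add_zero, Nat.cast_one, add_sub_right_comm P,
        qform_add_smul_one]
      ring

end ADMM

/-- Theorem 2.3 of the paper (rate of order 1/t²), ergodic part. -/
theorem stmt_5
    {p N : ℕ}
    (f g : EuclideanSpace ℝ (Fin N) → ℝ)
    (Gf : EuclideanSpace ℝ (Fin N) → EuclideanSpace ℝ (Fin N))
    (Lf : ℝ) (hLf : 0 ≤ Lf)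
    (hfconv : ConvexOn ℝ Set.univ f)
    (hfgrad : ∀ z, HasGradientAt f (Gf z) z)
    (hflip : ∀ u v, ‖Gf u - Gf v‖ ≤ Lf * ‖u - v‖)
    (μ : ℝ) (hμ : 0 < μ)
    (hg : ConvexOn ℝ Set.univ (fun z => g z - μ / 2 * ‖z‖ ^ 2))
    (A : EuclideanSpace ℝ (Fin N) →L[ℝ] EuclideanSpace ℝ (Fin p))
    (b : EuclideanSpace ℝ (Fin p))
    (β : ℝ) (hβ : 0 < β)
    (P : EuclideanSpace ℝ (Fin N) →L[ℝ] EuclideanSpace ℝ (Fin N))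
    (hPsym : ∀ u v, inner ℝ (P u) v = (inner ℝ u (P v) : ℝ))
    (hPpos : ∀ v, v ≠ 0 →
      0 < qform (P - β • ((ContinuousLinearMap.adjoint A).comp A)) v)
    (hPle : ∀ v,
      qform (P - β • ((ContinuousLinearMap.adjoint A).comp A)) v ≤ μ / 2 * ‖v‖ ^ 2)
    (xstar : EuclideanSpace ℝ (Fin N)) (lamstar : EuclideanSpace ℝ (Fin p))
    (w : EuclideanSpace ℝ (Fin N))
    (hw : ∀ z, (f xstar + g xstar) + inner ℝ w (z - xstar) ≤ f z + g z)
    (hkkt : w = ContinuousLinearMap.adjoint A lamstar)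
    (hfeas : A xstar = b)
    (x : ℕ → EuclideanSpace ℝ (Fin N)) (lamseq : ℕ → EuclideanSpace ℝ (Fin p))
    (hlam1 : lamseq 1 = 0)
    (hiter : ∀ k : ℕ, 1 ≤ k → ∃ v : EuclideanSpace ℝ (Fin N),
      (∀ z, g (x (k + 1)) + inner ℝ v (z - x (k + 1)) ≤ g z) ∧
      Gf (x k) - ContinuousLinearMap.adjoint A
          (lamseq k - ((k : ℝ) * β) • (A (x k) - b))
        + v + ((k : ℝ) • P + Lf • 1) (x (k + 1) - x k) = 0)
    (hlam : ∀ k : ℕ, 1 ≤ k →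
      lamseq (k + 1) = lamseq k - ((k : ℝ) * β) • (A (x (k + 1)) - b))
    (t : ℕ) (ht : 1 ≤ t)
    (k₀ T γ : ℝ)
    (hk₀def : k₀ = 2 * Lf / μ)
    (hT : T = (t : ℝ) * ((t : ℝ) + 2 * k₀ + 3) / 2)
    (hγ : γ = max (2 * ‖lamstar‖) (1 + ‖lamstar‖))
    (xbar : EuclideanSpace ℝ (Fin N))
    (hxbar : xbar = (1 / T) • ∑ k ∈ Finset.Icc 1 t, (((k : ℝ) + k₀ + 1) • x (k + 1))) :
    |(f xbar + g xbar) - (f xstar + g xstar)|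
        ≤ (1 / T) * sSup ((fun lam : EuclideanSpace ℝ (Fin p) =>
            (k₀ + 2) / (2 * β) * ‖lam‖ ^ 2 + (k₀ + 2) / 2 *
              qform (P + Lf • 1 - β • ((ContinuousLinearMap.adjoint A).comp A)) (x 1 - xstar))
            '' {l | ‖l‖ ≤ γ}) ∧
    ‖A xbar - b‖
        ≤ (1 / (T * max 1 ‖lamstar‖)) * sSup ((fun lam : EuclideanSpace ℝ (Fin p) =>
            (k₀ + 2) / (2 * β) * ‖lam‖ ^ 2 + (k₀ + 2) / 2 *
              qform (P + Lf • 1 - β • ((ContinuousLinearMap.adjoint A).comp A)) (x 1 - xstar))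
            '' {l | ‖l‖ ≤ γ}) := by
  have hk₀ : 0 ≤ k₀ := by rw [hk₀def]; positivity
  have hLk₀ : Lf = k₀ * μ / 2 := by rw [hk₀def]; field_simp
  have hM := isPositive_sub_smul_adjoint_comp_self (β := β) (A := A) hPsym fun v =>
    (eq_or_ne v 0).elim (fun hv => by simp [hv, qform]) fun hv => (hPpos v hv).le
  have hT_sum : ∑ k ∈ Finset.Icc 1 t, ((k : ℝ) + k₀ + 1) = T := by
    rw [sum_Icc_natCast_add_add_one, hT]
  have hT_pos : 0 < T := hT_sum ▸ Finset.sum_pos (fun k _ => by positivity)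
    ⟨1, Finset.mem_Icc.2 ⟨le_rfl, ht⟩⟩
  have hxbar' : xbar = (Finset.Icc 1 t).centerMass (fun k => (k : ℝ) + k₀ + 1)
      (fun k => x (k + 1)) := by
    rw [hxbar, Finset.centerMass, hT_sum, one_div]
  set φ : EuclideanSpace ℝ (Fin p) → ℝ := fun lam => (k₀ + 2) / (2 * β) * ‖lam‖ ^ 2
    + (k₀ + 2) / 2 * qform (P + Lf • 1 - β • ((ContinuousLinearMap.adjoint A).comp A)) (x 1 - xstar)
  have hgap : ∀ lam, ‖lam‖ ≤ γ → (f xbar + g xbar) - (f xstar + g xstar)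
      + inner ℝ lam (A xbar - b) ≤ (1 / T) * sSup (φ '' {l | ‖l‖ ≤ γ}) := by
    intro lam hlam_le
    have h := ergodic_lagrangian_le hfconv hfgrad hflip (strongConvexOn_iff_convex.2 hg) hμ.le
      hβ hk₀ hLk₀ hM hPle hfeas hlam1 hiter hlam ht lam
    rw [← hxbar', hT_sum] at h
    rw [one_div_mul_eq_div, le_div_iff₀' hT_pos]
    exact h.trans (le_sSup_image_norm_le (φ := φ) (by fun_prop) hlam_le)
  have hkkt' : inner ℝ lamstar (A xbar - b) ≤ (f xbar + g xbar) - (f xstar + g xstar) := by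
    have h := hw xbar
    rw [hkkt, ContinuousLinearMap.adjoint_inner_left, map_sub, hfeas] at h
    linarith
  have hγ' : ‖lamstar‖ + max 1 ‖lamstar‖ = γ := by
    rw [hγ, ← max_add_add_left, max_comm, two_mul, add_comm 1]
  obtain ⟨hobj, hres⟩ :=
    abs_le_and_mul_norm_le_of_forall_inner_le hgap hkkt' (le_max_right 1 _) hγ'.le
  refine ⟨hobj, ?_⟩
  rw [one_div_mul_eq_div, le_div_iff₀' (by positivity)]
  rw [one_div_mul_eq_div, le_div_iff₀' hT_pos] at hres
  linarith
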